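/- Let I=(G,w) be a MinPAC instance and let v ∈ V(G) be a vertex of degree 1 in the underlying undirected graph of G, with unique neighbor u (so, by strong connectivity, uv ∈ A(G) and vu ∈ A(G)). Let I'=(G',w') be the instance where G' = G[V(G) \ {v}] and w'(uv') = max{0, w(uv') − w(uv)} for every arc uv' ∈ A(G'), while w'(e)=w(e) for all arcs e of G' not outgoing from u. Then G' is strongly connected and opt(I) = opt(I') + w(vu) + w(uv). -/

import Mathlib

/-- A directed graph (given by its arc relation) is strongly connected if every
vertex can reach every other vertex by a directed path. -/
def StronglyConnected {V : Type*} (A : V → V → Prop) : Prop :=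
  ∀ u v : V, Relation.ReflTransGen A u v

open scoped Classical in
/-- The cost paid by a vertex `v` in the subgraph with arcs `B`:
the maximum weight of an outgoing arc of `v` (0 if there is none). -/
noncomputable def vertexCost {V : Type*} [Fintype V] (B : V → V → Prop)
    (w : V → V → ℕ) (v : V) : ℕ :=
  Finset.univ.sup fun u => if B v u then w v u else 0

/-- The total cost of the subgraph with arcs `B`. -/
noncomputable def pacCost {V : Type*} [Fintype V] (B : V → V → Prop)
    (w : V → V → ℕ) : ℕ :=
  ∑ v, vertexCost B w v

/-- A solution of a MinPAC instance `(A, w)`: a strongly connected spanning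
subgraph (given by its arc relation `B`). -/
def IsPACSolution {V : Type*} (A B : V → V → Prop) : Prop :=
  (∀ x y, B x y → A x y) ∧ StronglyConnected B

/-- The optimal cost of a MinPAC instance. -/
noncomputable def pacOpt {V : Type*} [Fintype V] (A : V → V → Prop)
    (w : V → V → ℕ) : ℕ :=
  sInf { c | ∃ B : V → V → Prop, IsPACSolution A B ∧ pacCost B w = c }

/-!
Every solution contains the arcs `uv` and `vu`, the only ways into and out of `v`. With `uv`
present, `u` pays `w(uv)` plus the largest truncated excess `w(uy) - w(uv)` over its other arcs,
and `v` pays at least `w(vu)`. Hence deleting `v` and reducing the weights at `u` turns a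
solution of `I` into one of `I'` that is cheaper by at least `w(vu) + w(uv)`, while reattaching
`v` to a solution of `I'` through the two arcs costs exactly that much.
-/

namespace Relation.ReflTransGen

variable {α : Type*} {r : α → α → Prop} {a b : α}

theorem exists_rel_leaving {p : α → Prop} (h : ReflTransGen r a b) (ha : p a) (hb : ¬p b) :
    ∃ x y, r x y ∧ p x ∧ ¬p y := by
  by_contra! hclosed
  induction h with
  | refl => exact hb ha
  | tail _ hcd ih => exact ih fun hc => hb (hclosed _ _ hcd hc)

end Relation.ReflTransGen

section Deletion

variable {V : Type*} [DecidableEq V]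

def removeVertex (B : V → V → Prop) (v : V) : {x // x ≠ v} → {x // x ≠ v} → Prop :=
  fun a b => B a.1 b.1

def reducedWeight (w : V → V → ℕ) (u v : V) : {x // x ≠ v} → {x // x ≠ v} → ℕ :=
  fun a b => if a.1 = u then w u b.1 - w u v else w a.1 b.1

def attachLeaf (u v : V) (B : {x // x ≠ v} → {x // x ≠ v} → Prop) : V → V → Prop :=
  fun x y => if hx : x = v then y = u else if hy : y = v then x = u else B ⟨x, hx⟩ ⟨y, hy⟩

theorem removeVertex_attachLeaf (u v : V) (B : {x // x ≠ v} → {x // x ≠ v} → Prop) :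
    removeVertex (attachLeaf u v B) v = B := by
  funext a b
  simp [removeVertex, attachLeaf, a.2, b.2]

theorem attachLeaf_apply_left {u v y : V} {B : {x // x ≠ v} → {x // x ≠ v} → Prop} :
    attachLeaf u v B v y ↔ y = u := by
  simp [attachLeaf]

theorem attachLeaf_apply_right {u v x : V} (hxv : x ≠ v) {B : {x // x ≠ v} → {x // x ≠ v} → Prop} :
    attachLeaf u v B x v ↔ x = u := by
  simp [attachLeaf, hxv]

end Deletion

section Cost

variable {V : Type*} [Fintype V]

theorem vertexCost_le_iff {B : V → V → Prop} {w : V → V → ℕ} {x : V} {c : ℕ} :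
    vertexCost B w x ≤ c ↔ ∀ y, B x y → w x y ≤ c := by
  unfold vertexCost
  simp only [Finset.sup_le_iff, Finset.mem_univ, true_implies]
  refine forall_congr' fun y => ?_
  split_ifs with h <;> simp [h]

theorem le_vertexCost {B : V → V → Prop} (w : V → V → ℕ) {x y : V} (h : B x y) :
    w x y ≤ vertexCost B w x :=
  vertexCost_le_iff.1 le_rfl y h

theorem vertexCost_eq_of_unique_out {B : V → V → Prop} (w : V → V → ℕ) {x y : V} (hxy : B x y)
    (hout : ∀ z, B x z → z = y) : vertexCost B w x = w x y :=
  le_antisymm (vertexCost_le_iff.2 fun _ hz => hout _ hz ▸ le_rfl) (le_vertexCost w hxy)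

variable [DecidableEq V]

theorem pacCost_eq_vertexCost_add_sum (B : V → V → Prop) (w : V → V → ℕ) (v : V) :
    pacCost B w = vertexCost B w v + ∑ a : {x // x ≠ v}, vertexCost B w a :=
  Fintype.sum_eq_add_sum_subtype_ne _ v

section LeafDeletion

variable {B : V → V → Prop} (w : V → V → ℕ) {u v : V}

theorem vertexCost_removeVertex_of_ne (hin : ∀ x, x ≠ v → B x v → x = u)
    (a : {x // x ≠ v}) (hau : a.1 ≠ u) :
    vertexCost (removeVertex B v) (reducedWeight w u v) a = vertexCost B w a := by
  refine le_antisymm (vertexCost_le_iff.2 fun b hb => ?_) (vertexCost_le_iff.2 fun y hy => ?_)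
  · simpa only [reducedWeight, if_neg hau] using le_vertexCost w hb
  · have hyv : y ≠ v := fun hyv => hau (hin a a.2 (hyv ▸ hy))
    have h := le_vertexCost (reducedWeight w u v) (show removeVertex B v a ⟨y, hyv⟩ from hy)
    simpa only [reducedWeight, if_neg hau] using h

theorem vertexCost_removeVertex_add (hne : u ≠ v) (huv : B u v) :
    vertexCost (removeVertex B v) (reducedWeight w u v) ⟨u, hne⟩ + w u v = vertexCost B w u := by
  have h_le : vertexCost (removeVertex B v) (reducedWeight w u v) ⟨u, hne⟩
      ≤ vertexCost B w u - w u v :=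
    vertexCost_le_iff.2 fun b hb => by
      simpa only [reducedWeight, if_true] using Nat.sub_le_sub_right (le_vertexCost w hb) _
  refine le_antisymm (by have := le_vertexCost w huv; omega) (vertexCost_le_iff.2 fun y hy => ?_)
  by_cases hyv : y = v
  · subst hyv
    exact Nat.le_add_left _ _
  · have h := le_vertexCost (reducedWeight w u v) (show removeVertex B v ⟨u, hne⟩ ⟨y, hyv⟩ from hy)
    simp only [reducedWeight, if_true] at h
    omega

theorem pacCost_eq_of_leaf (hne : u ≠ v) (hin : ∀ x, x ≠ v → B x v → x = u) (huv : B u v) :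
    pacCost B w
      = vertexCost B w v + pacCost (removeVertex B v) (reducedWeight w u v) + w u v := by
  have h_rest : ∑ a : {x // x ≠ v}, vertexCost B w a
      = pacCost (removeVertex B v) (reducedWeight w u v) + w u v := by
    rw [Fintype.sum_eq_add_sum_subtype_ne (fun a : {x // x ≠ v} => vertexCost B w a) ⟨u, hne⟩,
      pacCost, Fintype.sum_eq_add_sum_subtype_ne _ (⟨u, hne⟩ : {x // x ≠ v}),
      ← vertexCost_removeVertex_add w hne huv,
      Fintype.sum_congr _ _ fun b : {b : {x // x ≠ v} // b ≠ ⟨u, hne⟩} =>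
        vertexCost_removeVertex_of_ne w hin b.1 fun h => b.2 (Subtype.ext h)]
    ring
  rw [pacCost_eq_vertexCost_add_sum B w v, h_rest, add_assoc]

end LeafDeletion

end Cost

section Connectivity

open Relation

variable {V : Type*} {B : V → V → Prop} {u v : V}

theorem StronglyConnected.rel_of_forall_in (hB : StronglyConnected B) (hne : u ≠ v)
    (hin : ∀ x, x ≠ v → B x v → x = u) : B u v := by
  obtain ⟨x, y, hxy, hx, hy⟩ := (hB u v).exists_rel_leaving (p := (· ≠ v)) hne (not_not.2 rfl)
  obtain rfl : y = v := not_not.1 hy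
  obtain rfl := hin x hx hxy
  exact hxy

theorem StronglyConnected.rel_of_forall_out (hB : StronglyConnected B) (hne : u ≠ v)
    (hout : ∀ y, y ≠ v → B v y → y = u) : B v u := by
  obtain ⟨x, y, hxy, rfl, hy⟩ := (hB v u).exists_rel_leaving (p := (· = v)) rfl hne
  obtain rfl := hout y hy hxy
  exact hxy

variable [DecidableEq V]

/-- Paths of `B` project to paths avoiding `v` by replacing `v` with its only neighbour `u`. -/
theorem stronglyConnected_removeVertex (hB : StronglyConnected B) (hne : u ≠ v)
    (hin : ∀ x, x ≠ v → B x v → x = u) (hout : ∀ y, y ≠ v → B v y → y = u) :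
    StronglyConnected (removeVertex B v) := by
  let f : V → {x // x ≠ v} := fun x => if hx : x = v then ⟨u, hne⟩ else ⟨x, hx⟩
  have hstep : ∀ x y, B x y → ReflTransGen (removeVertex B v) (f x) (f y) := by
    intro x y hxy
    by_cases hx : x = v <;> by_cases hy : y = v
    · simp only [f, hx, hy, ReflTransGen.refl]
    · obtain rfl := hout y hy (hx ▸ hxy)
      simp only [f, hx, hy, dite_true, dite_false, ReflTransGen.refl]
    · obtain rfl := hin x hx (hy ▸ hxy)
      simp only [f, hx, hy, dite_true, dite_false, ReflTransGen.refl]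
    · simp only [f, hx, hy, dite_false]
      exact .single hxy
  intro a b
  simpa only [Function.onFun, f, a.2, b.2, dite_false] using
    ReflTransGen.lift' f hstep _ _ (hB a b)

theorem stronglyConnected_attachLeaf {B : {x // x ≠ v} → {x // x ≠ v} → Prop}
    (hB : StronglyConnected B) (hne : u ≠ v) : StronglyConnected (attachLeaf u v B) := by
  have hlift : ∀ a b : {x // x ≠ v}, ReflTransGen (attachLeaf u v B) a b := fun a b =>
    ReflTransGen.lift Subtype.val (fun a b h => by simpa [attachLeaf, a.2, b.2] using h) _ _
      (hB a b)
  intro x y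
  by_cases hx : x = v <;> by_cases hy : y = v
  · rw [hx, hy]
  · subst hx
    exact .head (attachLeaf_apply_left.2 rfl) (hlift ⟨u, hne⟩ ⟨y, hy⟩)
  · subst hy
    exact .tail (hlift ⟨x, hx⟩ ⟨u, hne⟩) ((attachLeaf_apply_right hne).2 rfl)
  · exact hlift ⟨x, hx⟩ ⟨y, hy⟩

end Connectivity

section Solutions

variable {V : Type*}

theorem isPACSolution_removeVertex [DecidableEq V] {A B : V → V → Prop} {u v : V}
    (hB : IsPACSolution A B) (hne : u ≠ v)
    (hin : ∀ x, x ≠ v → A x v → x = u) (hout : ∀ y, y ≠ v → A v y → y = u) :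
    IsPACSolution (removeVertex A v) (removeVertex B v) :=
  ⟨fun _ _ h => hB.1 _ _ h, stronglyConnected_removeVertex hB.2 hne
    (fun x hx h => hin x hx (hB.1 _ _ h)) (fun y hy h => hout y hy (hB.1 _ _ h))⟩

theorem isPACSolution_attachLeaf [DecidableEq V] {A : V → V → Prop} {u v : V}
    {B : {x // x ≠ v} → {x // x ≠ v} → Prop}
    (hB : IsPACSolution (removeVertex A v) B) (hne : u ≠ v) (huv : A u v) (hvu : A v u) :
    IsPACSolution A (attachLeaf u v B) := by
  refine ⟨fun x y hxy => ?_, stronglyConnected_attachLeaf hB.2 hne⟩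
  unfold attachLeaf at hxy
  split_ifs at hxy with hx hy
  · subst hx hxy; exact hvu
  · subst hy hxy; exact huv
  · exact hB.1 _ _ hxy

variable [Fintype V]

theorem pacOpt_le {A B : V → V → Prop} (w : V → V → ℕ) (hB : IsPACSolution A B) :
    pacOpt A w ≤ pacCost B w :=
  Nat.sInf_le ⟨B, hB, rfl⟩

theorem exists_pacCost_eq_pacOpt {A : V → V → Prop} (hA : StronglyConnected A)
    (w : V → V → ℕ) : ∃ B, IsPACSolution A B ∧ pacCost B w = pacOpt A w :=
  Nat.sInf_mem (s := {c | ∃ B, IsPACSolution A B ∧ pacCost B w = c})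
    ⟨_, A, ⟨fun _ _ h => h, hA⟩, rfl⟩

variable [DecidableEq V] {u v : V}

theorem pacCost_attachLeaf (w : V → V → ℕ) (hne : u ≠ v)
    (B : {x // x ≠ v} → {x // x ≠ v} → Prop) :
    pacCost (attachLeaf u v B) w = pacCost B (reducedWeight w u v) + w v u + w u v := by
  rw [pacCost_eq_of_leaf w hne (fun x hx h => (attachLeaf_apply_right hx).1 h)
      ((attachLeaf_apply_right hne).2 rfl),
    vertexCost_eq_of_unique_out w (attachLeaf_apply_left.2 rfl) fun _ => attachLeaf_apply_left.1,
    removeVertex_attachLeaf]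
  ring

theorem pacCost_removeVertex_add_le (w : V → V → ℕ) {B : V → V → Prop}
    (hB : StronglyConnected B) (hne : u ≠ v)
    (hin : ∀ x, x ≠ v → B x v → x = u) (hout : ∀ y, y ≠ v → B v y → y = u) :
    pacCost (removeVertex B v) (reducedWeight w u v) + w v u + w u v ≤ pacCost B w := by
  rw [pacCost_eq_of_leaf w hne hin (hB.rel_of_forall_in hne hin)]
  have := le_vertexCost w (hB.rel_of_forall_out hne hout)
  omega

end Solutions

/-- Let `(G, w)` be a MinPAC instance and `v` a vertex of degree 1 in the underlying
undirected graph, with unique neighbor `u` (so, by strong connectivity,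
`uv, vu ∈ A(G)`). Deleting `v` and replacing the weight of each arc `uv'` by
`max {0, w(uv') − w(uv)}` yields a strongly connected graph `G'` with
`opt(I) = opt(I') + w(vu) + w(uv)`. -/
theorem opt_eq_of_removing_degree_one_vertex
    {V : Type*} [Fintype V] [DecidableEq V] (A : V → V → Prop) (w : V → V → ℕ)
    (hG : StronglyConnected A)
    (v u : V) (hne : u ≠ v)
    (hnbr : ∀ x, x ≠ v → (A v x ∨ A x v) → x = u)
    (huv : A u v) (hvu : A v u) :
    StronglyConnected (fun a b : {x : V // x ≠ v} => A a.1 b.1) ∧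
    pacOpt A w =
      pacOpt (fun a b : {x : V // x ≠ v} => A a.1 b.1)
        (fun a b : {x : V // x ≠ v} => if a.1 = u then w u b.1 - w u v else w a.1 b.1)
      + w v u + w u v := by
  show StronglyConnected (removeVertex A v) ∧
    pacOpt A w = pacOpt (removeVertex A v) (reducedWeight w u v) + w v u + w u v
  have hin : ∀ x, x ≠ v → A x v → x = u := fun x hx h => hnbr x hx (.inr h)
  have hout : ∀ y, y ≠ v → A v y → y = u := fun y hy h => hnbr y hy (.inl h)
  have hG' := stronglyConnected_removeVertex hG hne hin hout
  refine ⟨hG', le_antisymm ?_ ?_⟩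
  · obtain ⟨B, hB, hcost⟩ := exists_pacCost_eq_pacOpt hG' (reducedWeight w u v)
    calc pacOpt A w ≤ pacCost (attachLeaf u v B) w :=
          pacOpt_le w (isPACSolution_attachLeaf hB hne huv hvu)
      _ = _ := by rw [pacCost_attachLeaf w hne, hcost]
  · obtain ⟨B, hB, hcost⟩ := exists_pacCost_eq_pacOpt hG w
    calc _ ≤ pacCost (removeVertex B v) (reducedWeight w u v) + w v u + w u v := by
          gcongr; exact pacOpt_le _ (isPACSolution_removeVertex hB hne hin hout)
      _ ≤ pacCost B w := pacCost_removeVertex_add_le w hB.2 hne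
          (fun x hx h => hin x hx (hB.1 _ _ h)) (fun y hy h => hout y hy (hB.1 _ _ h))
      _ = pacOpt A w := hcost
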